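/- Let G(s) = B^TQ(sI - (J-R)Q)^{-1}B be a port-Hamiltonian system (J skew-symmetric, R symmetric PSD, Q symmetric positive definite). Let s_1,...,s_r be distinct points closed under conjugation with tangent directions b_1,...,b_r closed under conjugation, let V_r have columns (s_iI - (J-R)Q)^{-1}Bb_i, let M ∈ ℂ^{r×r} be invertible with V̂_r = V_rM real and of full column rank, and set Ŵ_r = QV̂_r(V̂_r^TQV̂_r)^{-1}, J_r = Ŵ_r^TJŴ_r, R_r = Ŵ_r^TRŴ_r, Q_r = V̂_r^TQV̂_r, B_r = Ŵ_r^TB. Then the reduced system G_r(s) = B_r^TQ_r(sI - (J_r-R_r)Q_r)^{-1}B_r is port-Hamiltonian (J_r skew, R_r PSD, Q_r positive definite) and satisfies G(s_i)b_i = G_r(s_i)b_i for all i = 1,...,r. -/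

import Mathlib

/-!
Write `A = (J - R) Q` and `C = Bᵀ Q`. Since `Ŵ_rᵀ V̂_r = I` and `Ŵ_r Q_r = Q V̂_r`, the reduced
model is the Petrov–Galerkin projection `(Ŵ_rᵀ A V̂_r, Ŵ_rᵀ B, C V̂_r)` of `(A, B, C)`, while `J_r`,
`R_r` are congruences of `J`, `R` and `Q_r` is a Gram matrix of the injective `V̂_r`, which gives the
structure. The vector `v = (s_i I - A)⁻¹ B b_i` is the `i`-th column of `V = V̂_r M⁻¹`, so
`v = V̂_r ξ`; applying `Ŵ_rᵀ` to `(s_i I - A) V̂_r ξ = B b_i` shows `ξ = (s_i I - A_r)⁻¹ B_r b_i`,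
and then `G(s_i) b_i = C v = C_r ξ = G_r(s_i) b_i`.
-/

open Matrix

namespace Matrix

section Field

variable {K : Type*} [Field K] {m n r : Type*} [Fintype n] [Fintype r]

theorem mulVec_injective_of_rank_eq_card (A : Matrix m n K) (h : A.rank = Fintype.card n) :
    Function.Injective A.mulVec :=
  mulVec_injective_iff.mpr <| linearIndependent_iff_card_eq_finrank_span.mpr <| by
    rw [Set.finrank, ← rank_eq_finrank_span_cols, h]

variable [DecidableEq r]

theorem exists_mulVec_eq_col_of_eq_mul {V' V : Matrix m r K} {M : Matrix r r K}
    (hM : IsUnit M.det) (h : V' = V * M) (i : r) : ∃ x, V' *ᵥ x = V.col i :=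
  ⟨M⁻¹ *ᵥ Pi.single i 1, by
    rw [h, mulVec_mulVec, Matrix.mul_assoc, mul_nonsing_inv _ hM, Matrix.mul_one,
      mulVec_single_one]⟩

variable [Fintype m] [DecidableEq n]

theorem petrovGalerkin_mulVec_eq {p : Type*} (A : Matrix n n K) (B : Matrix n m K)
    (C : Matrix p n K) (V : Matrix n r K) (W : Matrix r n K) (hWV : W * V = 1) (z : K)
    (u : m → K) (hA : IsUnit (z • 1 - A).det) (hAr : IsUnit (z • 1 - W * A * V).det)
    (hu : ∃ x, V *ᵥ x = ((z • 1 - A)⁻¹ * B) *ᵥ u) :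
    (C * (z • 1 - A)⁻¹ * B) *ᵥ u = (C * V * (z • 1 - W * A * V)⁻¹ * (W * B)) *ᵥ u := by
  obtain ⟨x, hx⟩ := hu
  have hstate : (z • 1 - A) *ᵥ (V *ᵥ x) = B *ᵥ u := by
    rw [hx, mulVec_mulVec, ← Matrix.mul_assoc, mul_nonsing_inv _ hA, Matrix.one_mul]
  have hproj : W * (z • 1 - A) * V = z • 1 - W * A * V := by
    rw [Matrix.mul_sub, Matrix.sub_mul, Matrix.mul_smul, Matrix.mul_one, Matrix.smul_mul, hWV]
  have hreduced : (z • 1 - W * A * V) *ᵥ x = (W * B) *ᵥ u := by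
    rw [← hproj, ← mulVec_mulVec, ← mulVec_mulVec, hstate, mulVec_mulVec]
  have hcoords : x = (z • 1 - W * A * V)⁻¹ *ᵥ ((W * B) *ᵥ u) := by
    rw [← hreduced, mulVec_mulVec, nonsing_inv_mul _ hAr, one_mulVec]
  rw [Matrix.mul_assoc C, ← mulVec_mulVec, ← hx, hcoords, mulVec_mulVec, mulVec_mulVec,
    mulVec_mulVec, Matrix.mul_assoc C V, Matrix.mul_assoc C]

end Field

section CommRing

variable {α : Type*} [CommRing α] {n r : Type*} [Fintype n]

theorem transpose_mul_mul_self_of_transpose_eq_neg {J : Matrix n n α} (hJ : Jᵀ = -J)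
    (W : Matrix n r α) : (Wᵀ * J * W)ᵀ = -(Wᵀ * J * W) := by
  rw [transpose_mul, transpose_mul, transpose_transpose, hJ, Matrix.neg_mul, Matrix.mul_neg,
    Matrix.mul_assoc]

variable [Fintype r] [DecidableEq r]

noncomputable def biorthogonal (Q : Matrix n n α) (V : Matrix n r α) : Matrix n r α :=
  Q * V * (Vᵀ * Q * V)⁻¹

theorem biorthogonal_mul_gram {Q : Matrix n n α} {V : Matrix n r α}
    (hG : IsUnit (Vᵀ * Q * V).det) : biorthogonal Q V * (Vᵀ * Q * V) = Q * V :=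
  nonsing_inv_mul_cancel_right _ _ hG

theorem transpose_biorthogonal_mul_self {Q : Matrix n n α} (hQ : Qᵀ = Q) {V : Matrix n r α}
    (hG : IsUnit (Vᵀ * Q * V).det) : (biorthogonal Q V)ᵀ * V = 1 := by
  rw [biorthogonal, transpose_mul, transpose_mul, transpose_nonsing_inv, transpose_mul,
    transpose_mul, transpose_transpose, hQ, Matrix.mul_assoc, Matrix.mul_assoc,
    ← Matrix.mul_assoc Vᵀ, nonsing_inv_mul _ hG]

end CommRing

theorem map_ofReal_mul {l m n : Type*} [Fintype m] (A : Matrix l m ℝ) (B : Matrix m n ℝ) :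
    (A * B).map Complex.ofReal = A.map Complex.ofReal * B.map Complex.ofReal :=
  Matrix.map_mul (f := Complex.ofRealHom)

end Matrix

theorem stmt10_general (n m r : ℕ) (J R Q : Matrix (Fin n) (Fin n) ℝ) (B : Matrix (Fin n) (Fin m) ℝ)
    (hJ : Jᵀ = -J) (hR : R.PosSemidef) (hQ : Q.PosDef)
    (s : Fin r → ℂ) (b : Fin r → Fin m → ℂ)
    (V : Matrix (Fin n) (Fin r) ℂ)
    (hres : ∀ i, IsUnit (s i • (1 : Matrix (Fin n) (Fin n) ℂ)
        - ((J - R) * Q).map Complex.ofReal).det)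
    (hV : ∀ i j, V j i =
      (((s i • (1 : Matrix (Fin n) (Fin n) ℂ) - ((J - R) * Q).map Complex.ofReal)⁻¹ *
        B.map Complex.ofReal) *ᵥ b i) j)
    (M : Matrix (Fin r) (Fin r) ℂ) (hM : IsUnit M.det)
    (Vh : Matrix (Fin n) (Fin r) ℝ) (hVh : Vh.map Complex.ofReal = V * M)
    (hrank : Vh.rank = r) :
    let W : Matrix (Fin n) (Fin r) ℝ := Q * Vh * (Vhᵀ * Q * Vh)⁻¹
    let Jr : Matrix (Fin r) (Fin r) ℝ := Wᵀ * J * W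
    let Rr : Matrix (Fin r) (Fin r) ℝ := Wᵀ * R * W
    let Qr : Matrix (Fin r) (Fin r) ℝ := Vhᵀ * Q * Vh
    let Br : Matrix (Fin r) (Fin m) ℝ := Wᵀ * B
    Jrᵀ = -Jr ∧ Rr.PosSemidef ∧ Qr.PosDef ∧
    ∀ i, IsUnit (s i • (1 : Matrix (Fin r) (Fin r) ℂ)
        - ((Jr - Rr) * Qr).map Complex.ofReal).det →
      ((Bᵀ * Q).map Complex.ofReal *
        (s i • (1 : Matrix (Fin n) (Fin n) ℂ) - ((J - R) * Q).map Complex.ofReal)⁻¹ *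
        B.map Complex.ofReal) *ᵥ b i
      = ((Brᵀ * Qr).map Complex.ofReal *
        (s i • (1 : Matrix (Fin r) (Fin r) ℂ) - ((Jr - Rr) * Qr).map Complex.ofReal)⁻¹ *
        Br.map Complex.ofReal) *ᵥ b i := by
  intro W Jr Rr Qr Br
  have hQsymm : Qᵀ = Q := by simpa using hQ.isHermitian.eq
  have hQr : Qr.PosDef := by
    simpa using hQ.conjTranspose_mul_mul_same
      (mulVec_injective_of_rank_eq_card Vh (by rw [hrank, Fintype.card_fin]))
  have hQr_det : IsUnit Qr.det := hQr.det_pos.ne'.isUnit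
  have hWQr : W * Qr = Q * Vh := biorthogonal_mul_gram hQr_det
  have hWV : Wᵀ * Vh = 1 := transpose_biorthogonal_mul_self hQsymm hQr_det
  refine ⟨transpose_mul_mul_self_of_transpose_eq_neg hJ W,
    by simpa using hR.conjTranspose_mul_mul_same W, hQr, fun i hi => ?_⟩
  have hAr : (Jr - Rr) * Qr = Wᵀ * ((J - R) * Q) * Vh := by
    simp only [Jr, Rr, ← Matrix.sub_mul, ← Matrix.mul_sub, Matrix.mul_assoc, hWQr]
  have hCr : Brᵀ * Qr = Bᵀ * Q * Vh := by
    simp only [Br, transpose_mul, transpose_transpose, Matrix.mul_assoc, hWQr]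
  have hWVc : (Wᵀ * Vh).map Complex.ofReal = 1 := by
    rw [hWV, Matrix.map_one _ Complex.ofReal_zero Complex.ofReal_one]
  obtain ⟨x, hx⟩ := exists_mulVec_eq_col_of_eq_mul hM hVh i
  have hcol := hx.trans (funext (hV i))
  have hres_i := hres i
  simp only [hAr, hCr, Br, map_ofReal_mul] at hi hres_i hcol hWVc ⊢
  exact petrovGalerkin_mulVec_eq _ _ _ _ _ hWVc _ _ hres_i hi ⟨x, hcol⟩

theorem stmt10 (n m r : ℕ) (J R Q : Matrix (Fin n) (Fin n) ℝ) (B : Matrix (Fin n) (Fin m) ℝ)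
    (hJ : Jᵀ = -J) (hR : R.PosSemidef) (hQ : Q.PosDef)
    (s : Fin r → ℂ) (hs : Function.Injective s) (b : Fin r → Fin m → ℂ)
    (hsclosed : ∀ i, ∃ j, s j = (starRingEnd ℂ) (s i) ∧ b j = fun k => (starRingEnd ℂ) (b i k))
    (V : Matrix (Fin n) (Fin r) ℂ)
    (hres : ∀ i, IsUnit (s i • (1 : Matrix (Fin n) (Fin n) ℂ)
        - ((J - R) * Q).map Complex.ofReal).det)
    (hV : ∀ i j, V j i =
      (((s i • (1 : Matrix (Fin n) (Fin n) ℂ) - ((J - R) * Q).map Complex.ofReal)⁻¹ *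
        B.map Complex.ofReal) *ᵥ b i) j)
    (M : Matrix (Fin r) (Fin r) ℂ) (hM : IsUnit M.det)
    (Vh : Matrix (Fin n) (Fin r) ℝ) (hVh : Vh.map Complex.ofReal = V * M)
    (hrank : Vh.rank = r) :
    let W : Matrix (Fin n) (Fin r) ℝ := Q * Vh * (Vhᵀ * Q * Vh)⁻¹
    let Jr : Matrix (Fin r) (Fin r) ℝ := Wᵀ * J * W
    let Rr : Matrix (Fin r) (Fin r) ℝ := Wᵀ * R * W
    let Qr : Matrix (Fin r) (Fin r) ℝ := Vhᵀ * Q * Vh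
    let Br : Matrix (Fin r) (Fin m) ℝ := Wᵀ * B
    Jrᵀ = -Jr ∧ Rr.PosSemidef ∧ Qr.PosDef ∧
    ∀ i, IsUnit (s i • (1 : Matrix (Fin r) (Fin r) ℂ)
        - ((Jr - Rr) * Qr).map Complex.ofReal).det →
      ((Bᵀ * Q).map Complex.ofReal *
        (s i • (1 : Matrix (Fin n) (Fin n) ℂ) - ((J - R) * Q).map Complex.ofReal)⁻¹ *
        B.map Complex.ofReal) *ᵥ b i
      = ((Brᵀ * Qr).map Complex.ofReal *
        (s i • (1 : Matrix (Fin r) (Fin r) ℂ) - ((Jr - Rr) * Qr).map Complex.ofReal)⁻¹ *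
        Br.map Complex.ofReal) *ᵥ b i :=
  stmt10_general n m r J R Q B hJ hR hQ s b V hres hV M hM Vh hVh hrank
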